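/- First variation identity for the Hawking mass (equation (2.13) of the paper). Let n ≥ 3 be an integer, λ ≥ 0, and let V, k_S be differentiable real functions and k_I any real function on an interval of r > 0 with V > 0. With H(r) = (n−1)·√(V(r))/r, R(r) = (n−1)·r^{1−n}·(d/dr)[r^{n−2}·(1 − V(r))], and m_H(r) = (r^{n−2}/2)·[1 − V(r) + r²·k_S(r)²/(n−1)²], one has for every r in the interval: (d/dr)[m_H(r) + λ·r^n/2] = (r^{n−1}/(2(n−1)))·{ R(r) + (k_I + k_S)² − k_I² − k_S²/(n−1) + n(n−1)·λ − 2·k_S·[k_I − k_S/(n−1) − r·k_S′/(n−1)] }. -/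

import Mathlib

/-!
Write `m_H = ½ [r^{n-2}(1 - V) + r^n k_S²/(n-1)²]`. The first summand is the potential of the
scalar curvature, `(r^{n-2}(1 - V))' = r^{n-1} R/(n-1)`, and the product rule on the second gives
`(n r^{n-1} k_S² + 2 r^n k_S k_S')/(n-1)²`. The extrinsic-curvature terms of the right-hand side
collapse to `(n k_S² + 2 r k_S k_S')/(n-1)`, because the `k_I k_S` cross terms cancel.
-/

noncomputable section

/-- `R = (n-1) r^{1-n} (r^{n-2}(1 - V))'` with the derivative expanded; `V'` stands for `V'(r)`. -/
def scalarCurvature (n : ℕ) (V : ℝ → ℝ) (V' r : ℝ) : ℝ :=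
  ((n : ℝ) - 1) / r ^ (n - 1) * (((n : ℝ) - 2) * r ^ (n - 3) * (1 - V r) - r ^ (n - 2) * V')

def hawkingMass (n : ℕ) (V kS : ℝ → ℝ) (r : ℝ) : ℝ :=
  r ^ (n - 2) / 2 * (1 - V r + r ^ 2 * kS r ^ 2 / ((n : ℝ) - 1) ^ 2)

variable {n : ℕ} {V kS : ℝ → ℝ} {r V' kS' : ℝ}

theorem hasDerivAt_pow_sub_two_mul_one_sub (hn : 2 ≤ n) (hr : r ≠ 0) (hVd : HasDerivAt V V' r) :
    HasDerivAt (fun ρ => ρ ^ (n - 2) * (1 - V ρ))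
      (r ^ (n - 1) / ((n : ℝ) - 1) * scalarCurvature n V V' r) r := by
  have hn1 : (n : ℝ) - 1 ≠ 0 := sub_ne_zero.2 (by exact_mod_cast (by omega : n ≠ 1))
  refine ((hasDerivAt_pow (n - 2) r).fun_mul (hVd.const_sub 1)).congr_deriv ?_
  rw [scalarCurvature, Nat.cast_sub hn, show n - 2 - 1 = n - 3 by omega]
  field_simp
  ring

theorem hasDerivAt_pow_mul_sq (n : ℕ) (hkSd : HasDerivAt kS kS' r) :
    HasDerivAt (fun ρ => ρ ^ n * kS ρ ^ 2)
      (n * r ^ (n - 1) * kS r ^ 2 + 2 * r ^ n * kS r * kS') r := by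
  refine ((hasDerivAt_pow n r).fun_mul (hkSd.fun_pow 2)).congr_deriv ?_
  push_cast
  ring

theorem hawkingMass_eq (hn : 2 ≤ n) (ρ : ℝ) :
    hawkingMass n V kS ρ =
      (ρ ^ (n - 2) * (1 - V ρ) + ρ ^ n * kS ρ ^ 2 / ((n : ℝ) - 1) ^ 2) / 2 := by
  rw [hawkingMass, ← Nat.sub_add_cancel hn, pow_add, Nat.add_sub_cancel]
  ring

theorem hasDerivAt_hawkingMass (hn : 2 ≤ n) (hr : r ≠ 0) (hVd : HasDerivAt V V' r)
    (hkSd : HasDerivAt kS kS' r) :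
    HasDerivAt (hawkingMass n V kS)
      ((r ^ (n - 1) / ((n : ℝ) - 1) * scalarCurvature n V V' r
        + (n * r ^ (n - 1) * kS r ^ 2 + 2 * r ^ n * kS r * kS') / ((n : ℝ) - 1) ^ 2) / 2) r := by
  rw [show hawkingMass n V kS = _ from funext (hawkingMass_eq hn)]
  exact ((hasDerivAt_pow_sub_two_mul_one_sub hn hr hVd).add
    ((hasDerivAt_pow_mul_sq n hkSd).div_const _)).div_const 2

end

theorem hawking_mass_first_variation (n : ℕ) (hn : 3 ≤ n) (lam : ℝ)
    (V kI kS : ℝ → ℝ) (r V' kS' : ℝ) (hr : 0 < r)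
    (hVd : HasDerivAt V V' r) (hkSd : HasDerivAt kS kS' r) :
    HasDerivAt
      (fun ρ => ρ ^ (n - 2) / 2 * (1 - V ρ + ρ ^ 2 * kS ρ ^ 2 / ((n : ℝ) - 1) ^ 2)
        + lam * ρ ^ n / 2)
      (r ^ (n - 1) / (2 * ((n : ℝ) - 1)) *
        (((n : ℝ) - 1) / r ^ (n - 1) *
            (((n : ℝ) - 2) * r ^ (n - 3) * (1 - V r) - r ^ (n - 2) * V')
          + (kI r + kS r) ^ 2 - kI r ^ 2 - kS r ^ 2 / ((n : ℝ) - 1)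
          + (n : ℝ) * ((n : ℝ) - 1) * lam
          - 2 * kS r * (kI r - kS r / ((n : ℝ) - 1) - r * kS' / ((n : ℝ) - 1)))) r := by
  have hn1 : (n : ℝ) - 1 ≠ 0 := sub_ne_zero.2 (by exact_mod_cast (by omega : n ≠ 1))
  have hmass := hasDerivAt_hawkingMass (show 2 ≤ n by omega) hr.ne' hVd hkSd
  have hcosmological := ((hasDerivAt_pow n r).const_mul lam).div_const 2
  refine (hmass.fun_add hcosmological).congr_deriv ?_
  rw [scalarCurvature, ← mul_pow_sub_one (by omega : n ≠ 0) r]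
  field_simp
  ring
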